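/- Let (Ω₁,μ₁) and (Ω₂,μ₂) be (σ-finite) measure spaces, let f ∈ L(∞,∞)(Ω₁) and g ∈ L^∞(Ω₂), and define (f⊗g)(x,y) = f(x)g(y) on the product measure space Ω₁ × Ω₂. Then f⊗g ∈ L(∞,∞)(Ω₁ × Ω₂) and ‖f⊗g‖_{L(∞,∞)(Ω₁×Ω₂)} ≤ ‖f‖_{L(∞,∞)(Ω₁)} · ‖g‖_{L^∞(Ω₂)}. -/

import Mathlib

open MeasureTheory Set
open scoped ENNReal NNReal

noncomputable section

/-- The distribution function `λ_f(t) = μ {x : |f(x)| > t}`. -/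
def distFun {α : Type*} [MeasurableSpace α] (μ : Measure α) (f : α → ℝ) (t : ℝ) : ℝ≥0∞ :=
  μ {x | t < |f x|}

/-- The non-increasing rearrangement `f*(t) = inf {s > 0 : λ_f(s) ≤ t}`. -/
def rearr {α : Type*} [MeasurableSpace α] (μ : Measure α) (f : α → ℝ) (t : ℝ) : ℝ≥0∞ :=
  sInf (ENNReal.ofReal '' {s : ℝ | 0 < s ∧ distFun μ f s ≤ ENNReal.ofReal t})

/-- The maximal function `f**(t) = (1/t) ∫₀ᵗ f*(s) ds`. -/
def dstar {α : Type*} [MeasurableSpace α] (μ : Measure α) (f : α → ℝ) (t : ℝ) : ℝ≥0∞ :=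
  (∫⁻ s in Set.Ioc (0 : ℝ) t, rearr μ f s) / ENNReal.ofReal t

/-- The `L(∞,∞)` "norm" : `sup_{t>0} (f**(t) - f*(t))`. -/
def oscNorm {α : Type*} [MeasurableSpace α] (μ : Measure α) (f : α → ℝ) : ℝ≥0∞ :=
  ⨆ (t : ℝ) (_ : 0 < t), dstar μ f t - rearr μ f t

/-- The Marcinkiewicz `L(p,∞)` quasinorm `‖f‖*_{L(p,∞)} = sup_{t>0} t (λ_f(t))^{1/p}`. -/
def wkNorm {α : Type*} [MeasurableSpace α] (μ : Measure α) (p : ℝ) (f : α → ℝ) : ℝ≥0∞ :=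
  ⨆ (t : ℝ) (_ : 0 < t), ENNReal.ofReal t * distFun μ f t ^ (1 / p)

/-- `‖f‖_{L(p,∞)} = sup_{s>0} s^{1/p} f**(s)`. -/
def wkNormStarStar {α : Type*} [MeasurableSpace α] (μ : Measure α) (p : ℝ) (f : α → ℝ) : ℝ≥0∞ :=
  ⨆ (s : ℝ) (_ : 0 < s), ENNReal.ofReal s ^ (1 / p) * dstar μ f s

/-- `‖f‖*_{L(p,∞)} = sup_{s>0} s^{1/p} f*(s)` (rearrangement form). -/
def wkNormStar {α : Type*} [MeasurableSpace α] (μ : Measure α) (p : ℝ) (f : α → ℝ) : ℝ≥0∞ :=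
  ⨆ (s : ℝ) (_ : 0 < s), ENNReal.ofReal s ^ (1 / p) * rearr μ f s

/-- `‖f‖^#_{L(p,∞)} = sup_{s>0} s^{1/p} (f**(s) - f*(s))`. -/
def sharpNorm {α : Type*} [MeasurableSpace α] (μ : Measure α) (p : ℝ) (f : α → ℝ) : ℝ≥0∞ :=
  ⨆ (s : ℝ) (_ : 0 < s), ENNReal.ofReal s ^ (1 / p) * (dstar μ f s - rearr μ f s)

/-- `‖f‖^{##}_{L(p,∞)} = sup_{t>0} (λ_f(t))^{-(1-1/p)} ∫_t^∞ λ_f(s) ds`. -/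
def sharpSharpNorm {α : Type*} [MeasurableSpace α] (μ : Measure α) (p : ℝ) (f : α → ℝ) : ℝ≥0∞ :=
  ⨆ (t : ℝ) (_ : 0 < t),
    distFun μ f t ^ (-(1 - 1 / p)) * ∫⁻ s in Set.Ioi t, distFun μ f s

/-- `‖f‖^{##}_{L(∞,∞)} = inf {C : ∫_t^∞ λ_f(s) ds ≤ C λ_f(t) for all t > 0}`. -/
def sharpSharpInf {α : Type*} [MeasurableSpace α] (μ : Measure α) (f : α → ℝ) : ℝ≥0∞ :=
  sInf {C : ℝ≥0∞ | ∀ t : ℝ, 0 < t →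
    ∫⁻ s in Set.Ioi t, distFun μ f s ≤ C * distFun μ f t}

/-- O'Neil's quantity `inf {C^{1/p} : ∫_t^∞ λ_f(s) ds ≤ C t^{1-p} for all t > 0}`. -/
def oneilQuantity {α : Type*} [MeasurableSpace α] (μ : Measure α) (p : ℝ) (f : α → ℝ) : ℝ≥0∞ :=
  sInf {D : ℝ≥0∞ | ∃ C : ℝ≥0∞, D = C ^ (1 / p) ∧
    ∀ t : ℝ, 0 < t → ∫⁻ s in Set.Ioi t, distFun μ f s ≤ C * ENNReal.ofReal t ^ (1 - p)}

/-- A cube in `ℝⁿ` with sides parallel to the coordinate axes. -/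
def IsCube {n : ℕ} (Q : Set (Fin n → ℝ)) : Prop :=
  ∃ (a : Fin n → ℝ) (l : ℝ), 0 < l ∧ Q = Set.univ.pi fun i => Set.Icc (a i) (a i + l)

/-- A countable family of subcubes of `Q₀` with pairwise disjoint interiors. -/
def IsPackingIn {n : ℕ} (Q₀ : Set (Fin n → ℝ)) (Q : ℕ → Set (Fin n → ℝ)) : Prop :=
  (∀ i, IsCube (Q i) ∧ Q i ⊆ Q₀) ∧
    Pairwise fun i j => interior (Q i) ∩ interior (Q j) = ∅

/-- The average `f_Q = (1/|Q|) ∫_Q f`. -/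
def cubeAvg {n : ℕ} (f : (Fin n → ℝ) → ℝ) (Q : Set (Fin n → ℝ)) : ℝ :=
  ⨍ x in Q, f x

/-- The mean oscillation `(1/|Q|) ∫_Q |f - f_Q|`. -/
def meanOsc {n : ℕ} (f : (Fin n → ℝ) → ℝ) (Q : Set (Fin n → ℝ)) : ℝ :=
  ⨍ x in Q, |f x - cubeAvg f Q|

/-- The John–Nirenberg functional `JN_p(f,Q₀)`. -/
def JN {n : ℕ} (p : ℝ) (f : (Fin n → ℝ) → ℝ) (Q₀ : Set (Fin n → ℝ)) : ℝ≥0∞ :=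
  ⨆ (Q : ℕ → Set (Fin n → ℝ)) (_ : IsPackingIn Q₀ Q),
    (∑' i, volume (Q i) * ENNReal.ofReal (meanOsc f (Q i)) ^ p) ^ (1 / p)

/-- The BMO norm `‖f‖_{BMO(Q₀)}`. -/
def bmoNorm {n : ℕ} (f : (Fin n → ℝ) → ℝ) (Q₀ : Set (Fin n → ℝ)) : ℝ≥0∞ :=
  ⨆ (Q : Set (Fin n → ℝ)) (_ : IsCube Q ∧ Q ⊆ Q₀), ENNReal.ofReal (meanOsc f Q)

/-- The Garsia–Rodemich functional `GaRo_p(f,Q₀)`: the least constant `C` such that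
for every packing `{Qᵢ}` of `Q₀`,
`Σᵢ (1/|Qᵢ|) ∫_{Qᵢ}∫_{Qᵢ} |f(x)-f(y)| dx dy ≤ C (Σᵢ |Qᵢ|)^{1/p'}` where `1/p' = 1 - 1/p`. -/
def GaRo {n : ℕ} (p : ℝ) (f : (Fin n → ℝ) → ℝ) (Q₀ : Set (Fin n → ℝ)) : ℝ≥0∞ :=
  sInf {C : ℝ≥0∞ | ∀ Q : ℕ → Set (Fin n → ℝ), IsPackingIn Q₀ Q →
    (∑' i, (volume (Q i))⁻¹ *
        ∫⁻ x in Q i, ∫⁻ y in Q i, ENNReal.ofReal |f x - f y|) ≤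
      C * (∑' i, volume (Q i)) ^ (1 - 1 / p)}

/-!
The whole argument runs through the tail condition `∫_v^∞ λ_h ≤ C λ_h(v)` (for `v > 0` with
`λ_h(v) < ∞`). Applying the layer-cake formula to `h*` on `(0, t]` shows that `‖h‖_{L(∞,∞)}` is
such a constant `C` for `h`, and conversely that any such `C` bounds `‖h‖_{L(∞,∞)}`. The
condition passes from `f` to `f ⊗ g`: by Fubini `λ_{f⊗g}(u) = ∫ λ_{f·g(y)}(u) dν(y)`, and
scaling `f` by `g(y)` multiplies the constant by `|g(y)| ≤ ‖g‖_{L^∞}`.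
-/

lemma volume_setOf_pos_ofReal_lt (a : ℝ≥0∞) :
    volume {u : ℝ | 0 < u ∧ ENNReal.ofReal u < a} = a := by
  rcases eq_or_ne a ⊤ with rfl | ha
  · simp only [ENNReal.ofReal_lt_top, and_true]
    exact Real.volume_Ioi
  · have : {u : ℝ | 0 < u ∧ ENNReal.ofReal u < a} = Ioo 0 a.toReal := by
      ext u
      exact and_congr_right fun hu => ENNReal.ofReal_lt_iff_lt_toReal hu.le ha
    rw [this, Real.volume_Ioo, sub_zero, ENNReal.ofReal_toReal ha]

theorem lintegral_eq_lintegral_Ioi_measure_lt {γ : Type*} [MeasurableSpace γ]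
    (ρ : Measure γ) [SFinite ρ] {F : γ → ℝ≥0∞} (hF : Measurable F) :
    ∫⁻ s, F s ∂ρ = ∫⁻ u in Ioi 0, ρ {s | ENNReal.ofReal u < F s} := by
  have hS : MeasurableSet {p : γ × ℝ | ENNReal.ofReal p.2 < F p.1} :=
    measurableSet_lt (ENNReal.measurable_ofReal.comp measurable_snd) (hF.comp measurable_fst)
  have h := Measure.prod_apply_symm (μ := ρ) (ν := volume.restrict (Ioi (0 : ℝ))) hS
  rw [Measure.prod_apply hS] at h
  refine Eq.trans ?_ h
  refine lintegral_congr fun s => ?_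
  rw [Measure.restrict_apply' measurableSet_Ioi, ← volume_setOf_pos_ofReal_lt (F s)]
  congr 1
  ext u
  exact and_comm

lemma lintegral_Ioi_comp_div {F : ℝ → ℝ≥0∞} (hF : Measurable F) (v : ℝ) {c : ℝ}
    (hc : 0 < c) :
    ∫⁻ u in Ioi v, F (u / c) = ENNReal.ofReal c * ∫⁻ s in Ioi (v / c), F s := by
  have hmap : Measure.map (· * c⁻¹) volume = ENNReal.ofReal c • (volume : Measure ℝ) := by
    rw [Real.map_volume_mul_right (inv_ne_zero hc.ne'), inv_inv, abs_of_pos hc]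
  have hpre : (· * c⁻¹) ⁻¹' Ioi (v / c) = Ioi v := by
    ext u
    simp [← div_eq_mul_inv, div_lt_div_iff_of_pos_right hc]
  rw [← smul_eq_mul, ← lintegral_smul_measure, ← Measure.restrict_smul, ← hmap,
    setLIntegral_map measurableSet_Ioi hF (measurable_mul_const _), hpre]
  simp only [div_eq_mul_inv]

section Rearrangement

variable {α : Type*} [MeasurableSpace α] {μ : Measure α} {f : α → ℝ}

lemma distFun_antitone : Antitone (distFun μ f) := fun _ _ hab =>
  measure_mono fun _ hx => hab.trans_lt hx

lemma distFun_le_of_forall_lt {u : ℝ} {a : ℝ≥0∞}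
    (h : ∀ w, u < w → distFun μ f w ≤ a) :
    distFun μ f u ≤ a := by
  have hmono : Monotone fun n : ℕ => {x | u + 1 / ((n : ℝ) + 1) < |f x|} :=
    fun n m hnm x (hx : u + 1 / ((n : ℝ) + 1) < |f x|) =>
      show u + 1 / ((m : ℝ) + 1) < |f x| from lt_of_le_of_lt (by gcongr) hx
  have hunion : {x | u < |f x|} = ⋃ n : ℕ, {x | u + 1 / ((n : ℝ) + 1) < |f x|} := by
    ext x
    simp only [mem_ofPred_eq, mem_iUnion]
    constructor
    · intro hx
      obtain ⟨n, hn⟩ := exists_nat_one_div_lt (sub_pos.mpr hx)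
      exact ⟨n, by linarith⟩
    · rintro ⟨n, hn⟩
      exact lt_of_le_of_lt (le_add_of_nonneg_right (by positivity)) hn
  rw [distFun, hunion, hmono.measure_iUnion]
  exact iSup_le fun n => h _ (lt_add_of_pos_right u (by positivity))

lemma rearr_antitone : Antitone (rearr μ f) := fun _ _ hab =>
  sInf_le_sInf (image_mono fun _ hs => ⟨hs.1, hs.2.trans (ENNReal.ofReal_le_ofReal hab)⟩)

lemma rearr_le_ofReal {w s : ℝ} (hw : 0 < w) (h : distFun μ f w ≤ ENNReal.ofReal s) :
    rearr μ f s ≤ ENNReal.ofReal w :=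
  sInf_le ⟨w, ⟨hw, h⟩, rfl⟩

lemma ofReal_le_rearr {u s : ℝ} (h : ENNReal.ofReal s < distFun μ f u) :
    ENNReal.ofReal u ≤ rearr μ f s := by
  refine le_sInf ?_
  rintro _ ⟨w, ⟨-, hw⟩, rfl⟩
  refine ENNReal.ofReal_le_ofReal (le_of_not_gt fun hwu => ?_)
  exact ((distFun_antitone hwu.le).trans hw).not_gt h

lemma distFun_le_of_rearr_lt {u s : ℝ} (h : rearr μ f s < ENNReal.ofReal u) :
    distFun μ f u ≤ ENNReal.ofReal s :=
  le_of_not_gt fun hlt => (ofReal_le_rearr hlt).not_gt h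

lemma lintegral_Ioc_rearr_eq_dstar_mul {t : ℝ} (ht : 0 < t) :
    ∫⁻ s in Ioc 0 t, rearr μ f s = dstar μ f t * ENNReal.ofReal t := by
  rw [dstar, ENNReal.div_mul_cancel (ENNReal.ofReal_pos.mpr ht).ne' ENNReal.ofReal_ne_top]

lemma dstar_sub_rearr_le_oscNorm {t : ℝ} (ht : 0 < t) :
    dstar μ f t - rearr μ f t ≤ oscNorm μ f :=
  le_iSup₂ (f := fun t (_ : 0 < t) => dstar μ f t - rearr μ f t) t ht

lemma rearr_level_le (t u : ℝ) :
    volume.restrict (Ioc 0 t) {s | ENNReal.ofReal u < rearr μ f s} ≤ ENNReal.ofReal t := by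
  calc _ ≤ volume.restrict (Ioc 0 t) univ := measure_mono (subset_univ _)
    _ = ENNReal.ofReal t := by rw [Measure.restrict_apply_univ, Real.volume_Ioc, sub_zero]

lemma rearr_level_le_distFun (t : ℝ) {u : ℝ} (hu : 0 < u) :
    volume.restrict (Ioc 0 t) {s | ENNReal.ofReal u < rearr μ f s} ≤ distFun μ f u := by
  rw [Measure.restrict_apply' measurableSet_Ioc]
  calc _ ≤ volume {s : ℝ | 0 < s ∧ ENNReal.ofReal s < distFun μ f u} := by
        refine measure_mono fun s ⟨hs, hst⟩ => ⟨hst.1, lt_of_not_ge fun hle => ?_⟩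
        exact (rearr_le_ofReal hu hle).not_gt hs
    _ = distFun μ f u := volume_setOf_pos_ofReal_lt _

lemma ofReal_le_rearr_level {t u : ℝ} (h : ENNReal.ofReal u < rearr μ f t) :
    ENNReal.ofReal t ≤ volume.restrict (Ioc 0 t) {s | ENNReal.ofReal u < rearr μ f s} := by
  rw [Measure.restrict_apply' measurableSet_Ioc]
  calc ENNReal.ofReal t = volume (Ioc 0 t) := by rw [Real.volume_Ioc, sub_zero]
    _ ≤ volume ({s | ENNReal.ofReal u < rearr μ f s} ∩ Ioc 0 t) :=
      measure_mono fun s hs => ⟨h.trans_le (rearr_antitone hs.2), hs⟩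

lemma distFun_le_rearr_level {t u : ℝ} (hu : 0 ≤ u) (ht : distFun μ f u ≤ ENNReal.ofReal t) :
    distFun μ f u ≤ volume.restrict (Ioc 0 t) {s | ENNReal.ofReal u < rearr μ f s} := by
  refine distFun_le_of_forall_lt fun w huw => ?_
  have hwt : distFun μ f w ≤ ENNReal.ofReal t := (distFun_antitone huw.le).trans ht
  rw [Measure.restrict_apply' measurableSet_Ioc, ← volume_setOf_pos_ofReal_lt (distFun μ f w)]
  refine measure_mono fun s ⟨hs, hsw⟩ => ⟨?_, hs, ?_⟩
  · exact ((ENNReal.ofReal_lt_ofReal_iff'.mpr ⟨huw, hu.trans_lt huw⟩).trans_le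
      (ofReal_le_rearr hsw))
  · exact (ENNReal.ofReal_lt_ofReal_iff'.mp (hsw.trans_le hwt)).1.le

lemma measurable_rearr_level (t : ℝ) :
    Measurable fun u => volume.restrict (Ioc 0 t) {s | ENNReal.ofReal u < rearr μ f s} :=
  Antitone.measurable fun _ _ hab =>
    measure_mono fun _ hs => (ENNReal.ofReal_le_ofReal hab).trans_lt hs

lemma lintegral_Ioc_rearr_eq (t : ℝ) :
    ∫⁻ s in Ioc 0 t, rearr μ f s =
      ∫⁻ u in Ioi 0, volume.restrict (Ioc 0 t) {s | ENNReal.ofReal u < rearr μ f s} :=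
  lintegral_eq_lintegral_Ioi_measure_lt _ rearr_antitone.measurable

lemma ofReal_mul_rearr_add_lintegral_Ioi_distFun_le {t w : ℝ} (hw : 0 < w)
    (hwt : distFun μ f w ≤ ENNReal.ofReal t) :
    ENNReal.ofReal t * rearr μ f t + ∫⁻ u in Ioi w, distFun μ f u
      ≤ ∫⁻ s in Ioc 0 t, rearr μ f s := by
  have hrw : rearr μ f t ≤ ENNReal.ofReal w := rearr_le_ofReal hw hwt
  set L := fun u => volume.restrict (Ioc 0 t) {s | ENNReal.ofReal u < rearr μ f s}
  set B := {u : ℝ | 0 < u ∧ ENNReal.ofReal u < rearr μ f t}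
  have hdisj : Disjoint B (Ioi w) :=
    disjoint_left.mpr fun u hu (hwu : w < u) =>
      (hu.2.trans_le hrw).not_ge (ENNReal.ofReal_le_ofReal hwu.le)
  rw [lintegral_Ioc_rearr_eq]
  -- the layers of `f*` on `(0, t]` are full below height `f*(t)` and dominate `λ_f` above `w`
  calc ENNReal.ofReal t * rearr μ f t + ∫⁻ u in Ioi w, distFun μ f u
      = (∫⁻ _ in B, ENNReal.ofReal t) + ∫⁻ u in Ioi w, distFun μ f u := by
        rw [setLIntegral_const, volume_setOf_pos_ofReal_lt]
    _ ≤ (∫⁻ u in B, L u) + ∫⁻ u in Ioi w, L u := by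
        refine add_le_add (setLIntegral_mono (measurable_rearr_level t) fun u hu => ?_)
          (setLIntegral_mono (measurable_rearr_level t) fun u hu => ?_)
        · exact ofReal_le_rearr_level hu.2
        · exact distFun_le_rearr_level (hw.trans hu).le
            ((distFun_antitone (le_of_lt hu)).trans hwt)
    _ = ∫⁻ u in B ∪ Ioi w, L u := (lintegral_union (f := L) measurableSet_Ioi hdisj).symm
    _ ≤ ∫⁻ u in Ioi 0, L u :=
        lintegral_mono_set (union_subset (fun u hu => hu.1) fun u hu => hw.trans hu)

theorem lintegral_Ioi_distFun_le_oscNorm_mul {w : ℝ} (hw : 0 < w)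
    (hfin : distFun μ f w ≠ ⊤) :
    ∫⁻ u in Ioi w, distFun μ f u ≤ oscNorm μ f * distFun μ f w := by
  rcases eq_or_ne (distFun μ f w) 0 with h0 | h0
  · have hzero : ∀ u ∈ Ioi w, distFun μ f u = 0 := fun u hu =>
      nonpos_iff_eq_zero.mp (h0 ▸ distFun_antitone (le_of_lt hu))
    simp [setLIntegral_congr_fun measurableSet_Ioi hzero]
  set t := (distFun μ f w).toReal
  have ht : 0 < t := ENNReal.toReal_pos h0 hfin
  have hwt : distFun μ f w = ENNReal.ofReal t := (ENNReal.ofReal_toReal hfin).symm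
  have hr : ENNReal.ofReal t * rearr μ f t ≠ ⊤ :=
    ENNReal.mul_ne_top ENNReal.ofReal_ne_top
      (ne_top_of_le_ne_top ENNReal.ofReal_ne_top (rearr_le_ofReal hw hwt.le))
  have hlayers := ofReal_mul_rearr_add_lintegral_Ioi_distFun_le hw hwt.le
  rw [lintegral_Ioc_rearr_eq_dstar_mul ht] at hlayers
  calc ∫⁻ u in Ioi w, distFun μ f u
      ≤ dstar μ f t * ENNReal.ofReal t - ENNReal.ofReal t * rearr μ f t :=
        ENNReal.le_sub_of_add_le_left hr hlayers
    _ = (dstar μ f t - rearr μ f t) * ENNReal.ofReal t := by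
        rw [ENNReal.sub_mul fun _ _ => ENNReal.ofReal_ne_top, mul_comm (rearr μ f t)]
    _ ≤ oscNorm μ f * distFun μ f w := by
        rw [hwt]
        gcongr
        exact dstar_sub_rearr_le_oscNorm ht

lemma lintegral_Ioc_rearr_le (T : ℝ) {v : ℝ} (hv : 0 ≤ v) :
    ∫⁻ s in Ioc 0 T, rearr μ f s
      ≤ ENNReal.ofReal T * ENNReal.ofReal v + ∫⁻ u in Ioi v, distFun μ f u := by
  rw [lintegral_Ioc_rearr_eq, ← Ioc_union_Ioi_eq_Ioi hv]
  refine (lintegral_union_le _ _ _).trans (add_le_add ?_ ?_)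
  · calc _ ≤ ∫⁻ _ in Ioc 0 v, ENNReal.ofReal T := lintegral_mono fun u => rearr_level_le T u
      _ = ENNReal.ofReal T * ENNReal.ofReal v := by
        rw [setLIntegral_const, Real.volume_Ioc, sub_zero]
  · exact setLIntegral_mono distFun_antitone.measurable fun u hu =>
      rearr_level_le_distFun T (hv.trans_lt hu)

theorem oscNorm_le_of_lintegral_Ioi_distFun_le {C : ℝ≥0∞}
    (h : ∀ v, 0 < v → distFun μ f v ≠ ⊤ →
      ∫⁻ u in Ioi v, distFun μ f u ≤ C * distFun μ f v) :
    oscNorm μ f ≤ C := by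
  refine iSup₂_le fun T hT => tsub_le_iff_right.mpr ?_
  have hdstar : ∀ v, rearr μ f T < ENNReal.ofReal v →
      dstar μ f T ≤ C + ENNReal.ofReal v := by
    intro v hv
    have hv0 : 0 < v := ENNReal.ofReal_pos.mp (pos_of_gt hv)
    have hvT : distFun μ f v ≤ ENNReal.ofReal T := distFun_le_of_rearr_lt hv
    refine ENNReal.div_le_of_le_mul ?_
    calc ∫⁻ s in Ioc 0 T, rearr μ f s
        ≤ ENNReal.ofReal T * ENNReal.ofReal v + ∫⁻ u in Ioi v, distFun μ f u :=
          lintegral_Ioc_rearr_le T hv0.le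
      _ ≤ ENNReal.ofReal T * ENNReal.ofReal v + C * ENNReal.ofReal T := by
          gcongr
          exact (h v hv0 (ne_top_of_le_ne_top ENNReal.ofReal_ne_top hvT)).trans (by gcongr)
      _ = (C + ENNReal.ofReal v) * ENNReal.ofReal T := by ring
  refine ENNReal.le_of_forall_pos_le_add fun ε hε hfin => ?_
  have hr : rearr μ f T ≠ ⊤ := (ENNReal.add_lt_top.mp hfin).2.ne
  have hv : ENNReal.ofReal ((rearr μ f T).toReal + ε) = rearr μ f T + ε := by
    rw [ENNReal.ofReal_add ENNReal.toReal_nonneg ε.coe_nonneg, ENNReal.ofReal_toReal hr,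
      ENNReal.ofReal_coe_nnreal]
  calc dstar μ f T ≤ C + ENNReal.ofReal ((rearr μ f T).toReal + ε) :=
        hdstar _ (hv ▸ ENNReal.lt_add_right hr (by exact_mod_cast hε.ne'))
    _ = C + rearr μ f T + ε := by rw [hv, add_assoc]

end Rearrangement

section Product

variable {α β : Type*} [MeasurableSpace α] [MeasurableSpace β] {μ : Measure α}
  {f : α → ℝ}

lemma distFun_mul_const {c : ℝ} (hc : c ≠ 0) (u : ℝ) :
    distFun μ (fun x => f x * c) u = distFun μ f (u / |c|) := by
  simp only [distFun, abs_mul, div_lt_iff₀ (abs_pos.mpr hc)]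

lemma lintegral_Ioi_distFun_mul_const_le (c : ℝ) {v : ℝ} (hv : 0 < v)
    (hfin : distFun μ (fun x => f x * c) v ≠ ⊤) :
    ∫⁻ u in Ioi v, distFun μ (fun x => f x * c) u
      ≤ ENNReal.ofReal |c| * oscNorm μ f * distFun μ (fun x => f x * c) v := by
  rcases eq_or_ne c 0 with rfl | hc
  · have hzero : ∀ u ∈ Ioi v, distFun μ (fun x => f x * 0) u = 0 := fun u hu => by
      simp [distFun, not_lt.mpr (hv.trans hu).le]
    rw [setLIntegral_congr_fun measurableSet_Ioi hzero, lintegral_zero]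
    exact zero_le
  have hc' : 0 < |c| := abs_pos.mpr hc
  simp only [distFun_mul_const hc] at hfin ⊢
  rw [lintegral_Ioi_comp_div distFun_antitone.measurable v hc', mul_assoc]
  gcongr
  exact lintegral_Ioi_distFun_le_oscNorm_mul (div_pos hv hc') hfin

variable [SFinite μ] {ν : Measure β} [SFinite ν] {g : β → ℝ}

lemma distFun_prod_mul (hf : Measurable f) (hg : Measurable g) (u : ℝ) :
    distFun (μ.prod ν) (fun q => f q.1 * g q.2) u =
      ∫⁻ y, distFun μ (fun x => f x * g y) u ∂ν :=
  Measure.prod_apply_symm (measurableSet_lt measurable_const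
    ((hf.comp measurable_fst).mul (hg.comp measurable_snd)).abs)

lemma measurable_distFun_mul_slice (hf : Measurable f) (hg : Measurable g) :
    Measurable (Function.uncurry fun u y => distFun μ (fun x => f x * g y) u) :=
  measurable_measure_prodMk_left (measurableSet_lt (measurable_fst.comp measurable_fst)
    ((hf.comp measurable_snd).mul (hg.comp (measurable_snd.comp measurable_fst))).abs)

theorem lintegral_Ioi_distFun_prod_mul_le (hf : Measurable f) (hg : Measurable g)
    {v : ℝ} (hv : 0 < v) (hfin : distFun (μ.prod ν) (fun q => f q.1 * g q.2) v ≠ ⊤) :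
    ∫⁻ u in Ioi v, distFun (μ.prod ν) (fun q => f q.1 * g q.2) u
      ≤ oscNorm μ f * eLpNorm g ⊤ ν * distFun (μ.prod ν) (fun q => f q.1 * g q.2) v := by
  have hmeas := measurable_distFun_mul_slice (μ := μ) hf hg
  have hslice_fin : ∀ᵐ y ∂ν, distFun μ (fun x => f x * g y) v ≠ ⊤ := by
    rw [distFun_prod_mul hf hg] at hfin
    exact (ae_lt_top hmeas.of_uncurry_left hfin).mono fun _ h => h.ne
  have hg_le : ∀ᵐ y ∂ν, ENNReal.ofReal |g y| ≤ eLpNorm g ⊤ ν := by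
    filter_upwards [enorm_ae_le_eLpNormEssSup g ν] with y hy
    rwa [eLpNorm_exponent_top, ← Real.enorm_eq_ofReal_abs]
  simp only [distFun_prod_mul hf hg]
  calc ∫⁻ u in Ioi v, ∫⁻ y, distFun μ (fun x => f x * g y) u ∂ν
      = ∫⁻ y, (∫⁻ u in Ioi v, distFun μ (fun x => f x * g y) u) ∂ν :=
        lintegral_lintegral_swap hmeas.aemeasurable
    _ ≤ ∫⁻ y, oscNorm μ f * eLpNorm g ⊤ ν * distFun μ (fun x => f x * g y) v ∂ν := by
        refine lintegral_mono_ae ?_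
        filter_upwards [hslice_fin, hg_le] with y hy_fin hy_le
        refine (lintegral_Ioi_distFun_mul_const_le (g y) hv hy_fin).trans ?_
        rw [mul_comm (ENNReal.ofReal _)]
        gcongr
    _ = oscNorm μ f * eLpNorm g ⊤ ν * ∫⁻ y, distFun μ (fun x => f x * g y) v ∂ν :=
        lintegral_const_mul _ hmeas.of_uncurry_left

end Product

/-- `L(∞,∞)(Ω₁) ⊗ L^∞(Ω₂) ⊂ L(∞,∞)(Ω₁ × Ω₂)`, with
`‖f ⊗ g‖_{L(∞,∞)(Ω₁×Ω₂)} ≤ ‖f‖_{L(∞,∞)(Ω₁)} ‖g‖_{L^∞(Ω₂)}`. -/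
theorem tensor_linftyinfty {α β : Type*} [MeasurableSpace α] [MeasurableSpace β]
    (μ : Measure α) (ν : Measure β) [SigmaFinite μ] [SigmaFinite ν]
    (f : α → ℝ) (g : β → ℝ) (hf : Measurable f) (hg : Measurable g)
    (hfw : oscNorm μ f ≠ ⊤) (hgL : eLpNorm g ⊤ ν ≠ ⊤) :
    oscNorm (μ.prod ν) (fun q => f q.1 * g q.2) ≠ ⊤ ∧
      oscNorm (μ.prod ν) (fun q => f q.1 * g q.2) ≤ oscNorm μ f * eLpNorm g ⊤ ν := by
  have hbound : oscNorm (μ.prod ν) (fun q => f q.1 * g q.2) ≤ oscNorm μ f * eLpNorm g ⊤ ν :=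
    oscNorm_le_of_lintegral_Ioi_distFun_le fun _ hv hfin =>
      lintegral_Ioi_distFun_prod_mul_le hf hg hv hfin
  exact ⟨ne_top_of_le_ne_top (ENNReal.mul_ne_top hfw hgL) hbound, hbound⟩
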